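/- arXiv:1110.0561 — 8 statements merged into one kernel-verified Lean document; each statement's English description precedes it below -/
import Mathlib

section
/- Let (X¹,X²) be a random vector on a probability space. Let H⁽²⁾(t) = P(min(X¹,X²) ≤ t) be the distribution function of the minimum component, and set U⁽²⁾(t) = 1/(1 − H⁽²⁾(t)). Assume H⁽²⁾ is continuous and strictly increasing on {t : H⁽²⁾(t) < 1}. Let I ⊆ ℝ be an open interval, let ψ⁰ : I → (0,∞) be a function, let cₙ > 0 and dₙ ∈ ℝ be sequences such that for every y ∈ I, n·(1 − H⁽²⁾(cₙ y + dₙ)) → 1/ψ⁰(y) as n → ∞. Suppose there is a continuous function χ : (0,∞)² → [0,∞) such that for every s, t > 0, n·P(U⁽²⁾(X¹) > n s, U⁽²⁾(X²) > n t) → χ(s,t) as n → ∞. Then for every y¹, y² ∈ I, n·P(X¹ > cₙ y¹ + dₙ, X² > cₙ y² + dₙ) → χ(ψ⁰(y¹), ψ⁰(y²)) as n → ∞. -/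
open MeasureTheory Filter Set
open scoped ENNReal ProbabilityTheory

theorem hda_standard_forward
    {Ω : Type*} [MeasureSpace Ω] [IsProbabilityMeasure (ℙ : Measure Ω)]
    (X1 X2 : Ω → ℝ) (hX1 : Measurable X1) (hX2 : Measurable X2)
    (H2 : ℝ → ℝ)
    (hH2 : ∀ t, H2 t = (ℙ {ω | min (X1 ω) (X2 ω) ≤ t}).toReal)
    (U2 : ℝ → ℝ≥0∞)
    (hU2 : ∀ t, U2 t = 1 / ENNReal.ofReal (1 - H2 t))
    (hH2cont : Continuous H2)
    (hH2strict : StrictMonoOn H2 {t | H2 t < 1})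
    (I : Set ℝ) (hIopen : IsOpen I) (hIconn : I.OrdConnected)
    (ψ0 : ℝ → ℝ) (hψ0pos : ∀ y ∈ I, 0 < ψ0 y)
    (c d : ℕ → ℝ) (hc : ∀ n, 0 < c n)
    (hmin : ∀ y ∈ I,
      Tendsto (fun n : ℕ => (n : ℝ) * (1 - H2 (c n * y + d n))) atTop
        (nhds (1 / ψ0 y)))
    (χ : ℝ → ℝ → ℝ)
    (hχcont : ContinuousOn (fun p : ℝ × ℝ => χ p.1 p.2) (Ioi 0 ×ˢ Ioi 0))
    (hχ : ∀ s > (0:ℝ), ∀ t > (0:ℝ),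
      Tendsto (fun n : ℕ =>
          (n : ℝ) * (ℙ {ω | U2 (X1 ω) > ENNReal.ofReal (n * s) ∧
                            U2 (X2 ω) > ENNReal.ofReal (n * t)}).toReal)
        atTop (nhds (χ s t))) :
    ∀ y1 ∈ I, ∀ y2 ∈ I,
      Tendsto (fun n : ℕ =>
          (n : ℝ) * (ℙ {ω | X1 ω > c n * y1 + d n ∧ X2 ω > c n * y2 + d n}).toReal)
        atTop (nhds (χ (ψ0 y1) (ψ0 y2))) := by
  intro y1 hy1 y2 hy2
  have hH2mono : Monotone H2 := by
    intro a b hab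
    rw [hH2 a, hH2 b]
    exact ENNReal.toReal_mono (measure_ne_top _ _)
      (measure_mono fun ω h => le_trans h hab)
  have hU2mono : Monotone U2 := by
    intro a b hab
    rw [hU2 a, hU2 b, one_div, one_div]
    exact ENNReal.inv_le_inv' (ENNReal.ofReal_le_ofReal (by linarith [hH2mono hab]))
  -- key eventual lower bound
  have keyB : ∀ y ∈ I, ∀ r : ℝ, 0 < r → r < ψ0 y →
      ∀ᶠ n : ℕ in atTop, ENNReal.ofReal ((n : ℝ) * r) < U2 (c n * y + d n) := by
    intro y hy r hr hrlt
    have hψ := hψ0pos y hy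
    have ha := hmin y hy
    have h1 : ∀ᶠ n : ℕ in atTop,
        (n : ℝ) * (1 - H2 (c n * y + d n)) * r < 1 := by
      have hT : Tendsto (fun n : ℕ => (n : ℝ) * (1 - H2 (c n * y + d n)) * r) atTop
          (nhds (1 / ψ0 y * r)) := ha.mul_const r
      have hlt : 1 / ψ0 y * r < 1 := by
        rw [div_mul_eq_mul_div, one_mul, div_lt_one hψ]; exact hrlt
      exact hT.eventually_lt_const hlt
    have h2 : ∀ᶠ n : ℕ in atTop,
        0 < (n : ℝ) * (1 - H2 (c n * y + d n)) :=
      ha.eventually_const_lt (by positivity)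
    filter_upwards [h1, h2, eventually_ge_atTop 1] with n hn1 hn2 hn3
    have hnpos : (0:ℝ) < n := by exact_mod_cast hn3
    set x := 1 - H2 (c n * y + d n) with hx
    have hxpos : 0 < x := by nlinarith
    rw [hU2, ← hx, one_div, ← ENNReal.ofReal_inv_of_pos hxpos,
      ENNReal.ofReal_lt_ofReal_iff (by positivity), inv_eq_one_div,
      lt_div_iff₀ hxpos]
    nlinarith
  -- key eventual upper bound
  have keyC : ∀ y ∈ I, ∀ r : ℝ, ψ0 y < r →
      ∀ᶠ n : ℕ in atTop, U2 (c n * y + d n) < ENNReal.ofReal ((n : ℝ) * r) := by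
    intro y hy r hrlt
    have hψ := hψ0pos y hy
    have hr : 0 < r := lt_trans hψ hrlt
    have ha := hmin y hy
    have h1 : ∀ᶠ n : ℕ in atTop,
        1 < (n : ℝ) * (1 - H2 (c n * y + d n)) * r := by
      have hT : Tendsto (fun n : ℕ => (n : ℝ) * (1 - H2 (c n * y + d n)) * r) atTop
          (nhds (1 / ψ0 y * r)) := ha.mul_const r
      have hlt : 1 < 1 / ψ0 y * r := by
        rw [div_mul_eq_mul_div, one_mul, lt_div_iff₀ hψ, one_mul]; exact hrlt
      exact hT.eventually_const_lt hlt
    have h2 : ∀ᶠ n : ℕ in atTop,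
        0 < (n : ℝ) * (1 - H2 (c n * y + d n)) :=
      ha.eventually_const_lt (by positivity)
    filter_upwards [h1, h2, eventually_ge_atTop 1] with n hn1 hn2 hn3
    have hnpos : (0:ℝ) < n := by exact_mod_cast hn3
    set x := 1 - H2 (c n * y + d n) with hx
    have hxpos : 0 < x := by nlinarith
    rw [hU2, ← hx, one_div, ← ENNReal.ofReal_inv_of_pos hxpos,
      ENNReal.ofReal_lt_ofReal_iff (by positivity), inv_eq_one_div,
      div_lt_iff₀ hxpos]
    nlinarith
  set p1 := ψ0 y1 with hp1def
  set p2 := ψ0 y2 with hp2def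
  have hp1 : 0 < p1 := hψ0pos y1 hy1
  have hp2 : 0 < p2 := hψ0pos y2 hy2
  rw [Metric.tendsto_nhds]
  intro ε hε
  have hcont : ContinuousAt (fun p : ℝ × ℝ => χ p.1 p.2) (p1, p2) :=
    hχcont.continuousAt ((isOpen_Ioi.prod isOpen_Ioi).mem_nhds ⟨hp1, hp2⟩)
  rw [Metric.continuousAt_iff] at hcont
  obtain ⟨δ, hδ, hδ'⟩ := hcont (ε / 2) (by linarith)
  set η := min (δ / 2) (min (p1 / 2) (p2 / 2)) with hηdef
  have hηpos : 0 < η := lt_min (by linarith) (lt_min (by linarith) (by linarith))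
  have hηδ : η < δ := lt_of_le_of_lt (min_le_left _ _) (by linarith)
  have hη1 : η ≤ p1 / 2 := le_trans (min_le_right _ _) (min_le_left _ _)
  have hη2 : η ≤ p2 / 2 := le_trans (min_le_right _ _) (min_le_right _ _)
  have hs : 0 < p1 - η := by linarith
  have ht : 0 < p2 - η := by linarith
  have hd1 : dist ((p1 - η, p2 - η) : ℝ × ℝ) (p1, p2) < δ := by
    rw [Prod.dist_eq, Real.dist_eq, Real.dist_eq]
    have e1 : p1 - η - p1 = -η := by ring
    have e2 : p2 - η - p2 = -η := by ring
    rw [e1, e2, abs_neg, abs_of_pos hηpos, max_self]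
    exact hηδ
  have hd2 : dist ((p1 + η, p2 + η) : ℝ × ℝ) (p1, p2) < δ := by
    rw [Prod.dist_eq, Real.dist_eq, Real.dist_eq]
    have e1 : p1 + η - p1 = η := by ring
    have e2 : p2 + η - p2 = η := by ring
    rw [e1, e2, abs_of_pos hηpos, max_self]
    exact hηδ
  have hupper : dist (χ (p1 - η) (p2 - η)) (χ p1 p2) < ε / 2 := hδ' hd1
  have hlower : dist (χ (p1 + η) (p2 + η)) (χ p1 p2) < ε / 2 := hδ' hd2
  have hg := (Metric.tendsto_nhds.mp (hχ (p1 - η) hs (p2 - η) ht)) (ε / 2) (by linarith)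
  have hg' := (Metric.tendsto_nhds.mp
    (hχ (p1 + η) (by linarith) (p2 + η) (by linarith))) (ε / 2) (by linarith)
  filter_upwards [keyB y1 hy1 (p1 - η) hs (by linarith),
    keyB y2 hy2 (p2 - η) ht (by linarith),
    keyC y1 hy1 (p1 + η) (by linarith),
    keyC y2 hy2 (p2 + η) (by linarith), hg, hg'] with n hB1 hB2 hC1 hC2 hG hG'
  have incl1 : {ω | X1 ω > c n * y1 + d n ∧ X2 ω > c n * y2 + d n} ⊆
      {ω | U2 (X1 ω) > ENNReal.ofReal ((n : ℝ) * (p1 - η)) ∧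
           U2 (X2 ω) > ENNReal.ofReal ((n : ℝ) * (p2 - η))} := by
    rintro ω ⟨h1, h2⟩
    exact ⟨lt_of_lt_of_le hB1 (hU2mono h1.le), lt_of_lt_of_le hB2 (hU2mono h2.le)⟩
  have incl2 : {ω | U2 (X1 ω) > ENNReal.ofReal ((n : ℝ) * (p1 + η)) ∧
           U2 (X2 ω) > ENNReal.ofReal ((n : ℝ) * (p2 + η))} ⊆
      {ω | X1 ω > c n * y1 + d n ∧ X2 ω > c n * y2 + d n} := by
    rintro ω ⟨h1, h2⟩
    constructor
    · by_contra h
      push_neg at h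
      exact absurd h1 (not_lt.mpr (le_of_lt (lt_of_le_of_lt (hU2mono h) hC1)))
    · by_contra h
      push_neg at h
      exact absurd h2 (not_lt.mpr (le_of_lt (lt_of_le_of_lt (hU2mono h) hC2)))
  have hm1 : (n : ℝ) * (ℙ {ω | X1 ω > c n * y1 + d n ∧ X2 ω > c n * y2 + d n}).toReal ≤
      (n : ℝ) * (ℙ {ω | U2 (X1 ω) > ENNReal.ofReal ((n : ℝ) * (p1 - η)) ∧
           U2 (X2 ω) > ENNReal.ofReal ((n : ℝ) * (p2 - η))}).toReal :=
    mul_le_mul_of_nonneg_left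
      (ENNReal.toReal_mono (measure_ne_top _ _) (measure_mono incl1)) (Nat.cast_nonneg n)
  have hm2 : (n : ℝ) * (ℙ {ω | U2 (X1 ω) > ENNReal.ofReal ((n : ℝ) * (p1 + η)) ∧
           U2 (X2 ω) > ENNReal.ofReal ((n : ℝ) * (p2 + η))}).toReal ≤
      (n : ℝ) * (ℙ {ω | X1 ω > c n * y1 + d n ∧ X2 ω > c n * y2 + d n}).toReal :=
    mul_le_mul_of_nonneg_left
      (ENNReal.toReal_mono (measure_ne_top _ _) (measure_mono incl2)) (Nat.cast_nonneg n)
  rw [Real.dist_eq, abs_lt] at hG hG' ⊢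
  rw [Real.dist_eq, abs_lt] at hupper hlower
  constructor <;> [nlinarith [hm2, hG'.1]; nlinarith [hm1, hG.2]]
end

section
/- Let (X¹,X²) be a random vector on a probability space. Let H⁽²⁾(t) = P(min(X¹,X²) ≤ t) be the distribution function of the minimum component, and set U⁽²⁾(t) = 1/(1 − H⁽²⁾(t)). Assume H⁽²⁾ is continuous and strictly increasing on {t : H⁽²⁾(t) < 1}. Let I ⊆ ℝ be an open interval and let ψ⁰ : I → (0,∞) be a continuous, strictly increasing bijection from I onto (0,∞). Let cₙ > 0 and dₙ ∈ ℝ be sequences such that for every y ∈ I, n·(1 − H⁽²⁾(cₙ y + dₙ)) → 1/ψ⁰(y) as n → ∞. Suppose there is a continuous function ν⁰ : I × I → [0,∞) such that for every y¹, y² ∈ I, n·P(X¹ > cₙ y¹ + dₙ, X² > cₙ y² + dₙ) → ν⁰(y¹, y²) as n → ∞. Then for every s, t > 0, n·P(U⁽²⁾(X¹) > n s, U⁽²⁾(X²) > n t) → ν⁰((ψ⁰)⁻¹(s), (ψ⁰)⁻¹(t)) as n → ∞. -/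
open MeasureTheory Filter Set
open scoped ENNReal ProbabilityTheory

theorem hda_standard_converse
    {Ω : Type*} [MeasureSpace Ω] [IsProbabilityMeasure (ℙ : Measure Ω)]
    (X1 X2 : Ω → ℝ) (hX1 : Measurable X1) (hX2 : Measurable X2)
    (H2 : ℝ → ℝ)
    (hH2 : ∀ t, H2 t = (ℙ {ω | min (X1 ω) (X2 ω) ≤ t}).toReal)
    (U2 : ℝ → ℝ≥0∞)
    (hU2 : ∀ t, U2 t = 1 / ENNReal.ofReal (1 - H2 t))
    (hH2cont : Continuous H2)
    (hH2strict : StrictMonoOn H2 {t | H2 t < 1})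
    (I : Set ℝ) (hIopen : IsOpen I) (hIconn : I.OrdConnected)
    (ψ0 : ℝ → ℝ)
    (hψ0cont : ContinuousOn ψ0 I)
    (hψ0mono : StrictMonoOn ψ0 I)
    (hψ0bij : Set.BijOn ψ0 I (Ioi 0))
    (c d : ℕ → ℝ) (hc : ∀ n, 0 < c n)
    (hmin : ∀ y ∈ I,
      Tendsto (fun n : ℕ => (n : ℝ) * (1 - H2 (c n * y + d n))) atTop
        (nhds (1 / ψ0 y)))
    (ν0 : ℝ → ℝ → ℝ)
    (hν0cont : ContinuousOn (fun p : ℝ × ℝ => ν0 p.1 p.2) (I ×ˢ I))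
    (hν0nonneg : ∀ y1 ∈ I, ∀ y2 ∈ I, 0 ≤ ν0 y1 y2)
    (hconv : ∀ y1 ∈ I, ∀ y2 ∈ I,
      Tendsto (fun n : ℕ =>
          (n : ℝ) * (ℙ {ω | X1 ω > c n * y1 + d n ∧ X2 ω > c n * y2 + d n}).toReal)
        atTop (nhds (ν0 y1 y2))) :
    ∀ s > (0:ℝ), ∀ t > (0:ℝ),
      Tendsto (fun n : ℕ =>
          (n : ℝ) * (ℙ {ω | U2 (X1 ω) > ENNReal.ofReal (n * s) ∧
                            U2 (X2 ω) > ENNReal.ofReal (n * t)}).toReal)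
        atTop
        (nhds (ν0 (Function.invFunOn ψ0 I s) (Function.invFunOn ψ0 I t))) := by

  intro s hs t ht
  -- basic monotonicity facts
  have hH2mono : Monotone H2 := by
    intro u v huv
    rw [hH2 u, hH2 v]
    exact ENNReal.toReal_mono (measure_ne_top _ _)
      (measure_mono (fun ω hω => le_trans hω huv))
  have hU2mono : Monotone U2 := by
    intro u v huv
    rw [hU2 u, hU2 v, one_div, one_div]
    exact ENNReal.inv_le_inv.mpr (ENNReal.ofReal_le_ofReal (by linarith [hH2mono huv]))
  -- key lemmas relating U2 and H2
  have lemA : ∀ (r w : ℝ), 0 < r → 1 - H2 w < 1/r → ENNReal.ofReal r < U2 w := by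
    intro r w hr hlt
    rw [hU2 w, one_div]
    have h1 : ENNReal.ofReal (1 - H2 w) < ENNReal.ofReal (1/r) :=
      (ENNReal.ofReal_lt_ofReal_iff (by positivity)).mpr hlt
    rw [one_div, ENNReal.ofReal_inv_of_pos hr] at h1
    exact ENNReal.lt_inv_iff_lt_inv.mp h1
  have lemB : ∀ (r w : ℝ), 0 < r → 1/r < 1 - H2 w → U2 w < ENNReal.ofReal r := by
    intro r w hr hlt
    rw [hU2 w, one_div]
    have h1 : ENNReal.ofReal (1/r) < ENNReal.ofReal (1 - H2 w) :=
      (ENNReal.ofReal_lt_ofReal_iff (lt_trans (by positivity) hlt)).mpr hlt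
    rw [one_div, ENNReal.ofReal_inv_of_pos hr] at h1
    exact ENNReal.inv_lt_iff_inv_lt.mpr h1
  -- the inverse points
  have hsIm : ∃ x ∈ I, ψ0 x = s := hψ0bij.surjOn (Set.mem_Ioi.mpr hs)
  have htIm : ∃ x ∈ I, ψ0 x = t := hψ0bij.surjOn (Set.mem_Ioi.mpr ht)
  set a := Function.invFunOn ψ0 I s with ha
  set b := Function.invFunOn ψ0 I t with hb
  have haI : a ∈ I := Function.invFunOn_mem hsIm
  have hbI : b ∈ I := Function.invFunOn_mem htIm
  have haψ : ψ0 a = s := Function.invFunOn_eq hsIm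
  have hbψ : ψ0 b = t := Function.invFunOn_eq htIm
  refine tendsto_order.2 ⟨?_, ?_⟩
  · -- lower bound
    intro a0 ha0
    have hcontAt : ContinuousAt (fun p : ℝ × ℝ => ν0 p.1 p.2) (a, b) :=
      hν0cont.continuousAt ((hIopen.prod hIopen).mem_nhds ⟨haI, hbI⟩)
    have hev : ∀ᶠ p : ℝ × ℝ in nhds (a, b), a0 < ν0 p.1 p.2 :=
      hcontAt.eventually (eventually_gt_nhds ha0)
    rw [nhds_prod_eq] at hev
    obtain ⟨pa, hpa, pb, hpb, hab⟩ := eventually_prod_iff.mp hev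
    have h1 : ∀ᶠ x in nhdsWithin a (Ioi a), (pa x ∧ x ∈ I) ∧ a < x :=
      ((hpa.and (hIopen.eventually_mem haI)).filter_mono nhdsWithin_le_nhds).and
        eventually_mem_nhdsWithin
    obtain ⟨y1, ⟨hpay1, hy1I⟩, hy1gt⟩ := h1.exists
    have h2 : ∀ᶠ x in nhdsWithin b (Ioi b), (pb x ∧ x ∈ I) ∧ b < x :=
      ((hpb.and (hIopen.eventually_mem hbI)).filter_mono nhdsWithin_le_nhds).and
        eventually_mem_nhdsWithin
    obtain ⟨y2, ⟨hpby2, hy2I⟩, hy2gt⟩ := h2.exists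
    have hν : a0 < ν0 y1 y2 := hab hpay1 hpby2
    have hψy1 : s < ψ0 y1 := haψ ▸ hψ0mono haI hy1I hy1gt
    have hψy2 : t < ψ0 y2 := hbψ ▸ hψ0mono hbI hy2I hy2gt
    have hev1 : ∀ᶠ n : ℕ in atTop, (n : ℝ) * (1 - H2 (c n * y1 + d n)) < 1/s :=
      (hmin y1 hy1I).eventually_lt_const (by
        apply one_div_lt_one_div_of_lt hs hψy1)
    have hev2 : ∀ᶠ n : ℕ in atTop, (n : ℝ) * (1 - H2 (c n * y2 + d n)) < 1/t :=
      (hmin y2 hy2I).eventually_lt_const (by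
        apply one_div_lt_one_div_of_lt ht hψy2)
    have hgev : ∀ᶠ n : ℕ in atTop,
        a0 < (n : ℝ) * (ℙ {ω | X1 ω > c n * y1 + d n ∧ X2 ω > c n * y2 + d n}).toReal :=
      (hconv y1 hy1I y2 hy2I).eventually_const_lt hν
    filter_upwards [hev1, hev2, hgev, eventually_ge_atTop 1] with n h1' h2' h3' hn
    have hn0 : (0:ℝ) < (n : ℝ) := by exact_mod_cast Nat.lt_of_lt_of_le Nat.zero_lt_one hn
    have hincl : {ω | X1 ω > c n * y1 + d n ∧ X2 ω > c n * y2 + d n} ⊆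
        {ω | U2 (X1 ω) > ENNReal.ofReal ((n : ℝ) * s) ∧
             U2 (X2 ω) > ENNReal.ofReal ((n : ℝ) * t)} := by
      rintro ω ⟨hω1, hω2⟩
      have key1 : 1 - H2 (c n * y1 + d n) < 1/((n : ℝ) * s) := by
        rw [lt_div_iff₀ (by positivity)]
        have h := mul_lt_mul_of_pos_right h1' hs
        rw [one_div, inv_mul_cancel₀ (ne_of_gt hs)] at h
        nlinarith
      have key2 : 1 - H2 (c n * y2 + d n) < 1/((n : ℝ) * t) := by
        rw [lt_div_iff₀ (by positivity)]
        have h := mul_lt_mul_of_pos_right h2' ht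
        rw [one_div, inv_mul_cancel₀ (ne_of_gt ht)] at h
        nlinarith
      exact ⟨lt_of_lt_of_le (lemA _ _ (by positivity) key1) (hU2mono (le_of_lt hω1)),
             lt_of_lt_of_le (lemA _ _ (by positivity) key2) (hU2mono (le_of_lt hω2))⟩
    refine lt_of_lt_of_le h3' ?_
    exact mul_le_mul_of_nonneg_left
      (ENNReal.toReal_mono (measure_ne_top _ _) (measure_mono hincl)) (le_of_lt hn0)
  · -- upper bound
    intro b0 hb0
    have hcontAt : ContinuousAt (fun p : ℝ × ℝ => ν0 p.1 p.2) (a, b) :=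
      hν0cont.continuousAt ((hIopen.prod hIopen).mem_nhds ⟨haI, hbI⟩)
    have hev : ∀ᶠ p : ℝ × ℝ in nhds (a, b), ν0 p.1 p.2 < b0 :=
      hcontAt.eventually (eventually_lt_nhds hb0)
    rw [nhds_prod_eq] at hev
    obtain ⟨pa, hpa, pb, hpb, hab⟩ := eventually_prod_iff.mp hev
    have h1 : ∀ᶠ x in nhdsWithin a (Iio a), (pa x ∧ x ∈ I) ∧ x < a :=
      ((hpa.and (hIopen.eventually_mem haI)).filter_mono nhdsWithin_le_nhds).and
        eventually_mem_nhdsWithin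
    obtain ⟨y1, ⟨hpay1, hy1I⟩, hy1lt⟩ := h1.exists
    have h2 : ∀ᶠ x in nhdsWithin b (Iio b), (pb x ∧ x ∈ I) ∧ x < b :=
      ((hpb.and (hIopen.eventually_mem hbI)).filter_mono nhdsWithin_le_nhds).and
        eventually_mem_nhdsWithin
    obtain ⟨y2, ⟨hpby2, hy2I⟩, hy2lt⟩ := h2.exists
    have hν : ν0 y1 y2 < b0 := hab hpay1 hpby2
    have hψy1pos : 0 < ψ0 y1 := hψ0bij.mapsTo hy1I
    have hψy2pos : 0 < ψ0 y2 := hψ0bij.mapsTo hy2I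
    have hψy1 : ψ0 y1 < s := haψ ▸ hψ0mono hy1I haI hy1lt
    have hψy2 : ψ0 y2 < t := hbψ ▸ hψ0mono hy2I hbI hy2lt
    have hev1 : ∀ᶠ n : ℕ in atTop, 1/s < (n : ℝ) * (1 - H2 (c n * y1 + d n)) :=
      (hmin y1 hy1I).eventually_const_lt (one_div_lt_one_div_of_lt hψy1pos hψy1)
    have hev2 : ∀ᶠ n : ℕ in atTop, 1/t < (n : ℝ) * (1 - H2 (c n * y2 + d n)) :=
      (hmin y2 hy2I).eventually_const_lt (one_div_lt_one_div_of_lt hψy2pos hψy2)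
    have hgev : ∀ᶠ n : ℕ in atTop,
        (n : ℝ) * (ℙ {ω | X1 ω > c n * y1 + d n ∧ X2 ω > c n * y2 + d n}).toReal < b0 :=
      (hconv y1 hy1I y2 hy2I).eventually_lt_const hν
    filter_upwards [hev1, hev2, hgev, eventually_ge_atTop 1] with n h1' h2' h3' hn
    have hn0 : (0:ℝ) < (n : ℝ) := by exact_mod_cast Nat.lt_of_lt_of_le Nat.zero_lt_one hn
    have hincl : {ω | U2 (X1 ω) > ENNReal.ofReal ((n : ℝ) * s) ∧
             U2 (X2 ω) > ENNReal.ofReal ((n : ℝ) * t)} ⊆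
        {ω | X1 ω > c n * y1 + d n ∧ X2 ω > c n * y2 + d n} := by
      have key1 : 1/((n : ℝ) * s) < 1 - H2 (c n * y1 + d n) := by
        rw [div_lt_iff₀ (by positivity)]
        have h := mul_lt_mul_of_pos_right h1' hs
        rw [one_div, inv_mul_cancel₀ (ne_of_gt hs)] at h
        nlinarith
      have key2 : 1/((n : ℝ) * t) < 1 - H2 (c n * y2 + d n) := by
        rw [div_lt_iff₀ (by positivity)]
        have h := mul_lt_mul_of_pos_right h2' ht
        rw [one_div, inv_mul_cancel₀ (ne_of_gt ht)] at h
        nlinarith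
      have hB1 := lemB ((n : ℝ) * s) (c n * y1 + d n) (by positivity) key1
      have hB2 := lemB ((n : ℝ) * t) (c n * y2 + d n) (by positivity) key2
      rintro ω ⟨hω1, hω2⟩
      constructor
      · by_contra hle
        push_neg at hle
        exact absurd hω1 (not_lt.mpr (le_of_lt (lt_of_le_of_lt (hU2mono hle) hB1)))
      · by_contra hle
        push_neg at hle
        exact absurd hω2 (not_lt.mpr (le_of_lt (lt_of_le_of_lt (hU2mono hle) hB2)))
    refine lt_of_le_of_lt ?_ h3'
    exact mul_le_mul_of_nonneg_left
      (ENNReal.toReal_mono (measure_ne_top _ _) (measure_mono hincl)) (le_of_lt hn0)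
end

section
/- Let (X¹,X²) be a random vector on a probability space. Let H²(t) = P(X² ≤ t) be the distribution function of the second component, and set U²(t) = 1/(1 − H²(t)). Assume H² is continuous and strictly increasing on {t : H²(t) < 1}. Let I ⊆ ℝ be an open interval, let ψ^⊓ : I → (0,∞) be a function, and let eₙ > 0 and fₙ ∈ ℝ be sequences such that for every y ∈ I, n·(1 − H²(eₙ y + fₙ)) → 1/ψ^⊓(y) as n → ∞. Suppose there is a continuous function χ : [0,∞) × (0,∞) → [0,∞) such that for every s ≥ 0 and t > 0, n·P(U²(X¹) > n s, U²(X²) > n t) → χ(s,t) as n → ∞. Then for every y¹, y² ∈ I: (a) n·P(X¹ > eₙ y¹ + fₙ, X² > eₙ y² + fₙ) → χ(ψ^⊓(y¹), ψ^⊓(y²)), and (b) n·P(X¹ ≤ eₙ y¹ + fₙ, X² > eₙ y² + fₙ) → 1/ψ^⊓(y²) − χ(ψ^⊓(y¹), ψ^⊓(y²)) as n → ∞. -/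
open MeasureTheory Filter Set
open scoped ENNReal ProbabilityTheory

theorem hda_nonstandard_forward
    {Ω : Type*} [MeasureSpace Ω] [IsProbabilityMeasure (ℙ : Measure Ω)]
    (X1 X2 : Ω → ℝ) (hX1 : Measurable X1) (hX2 : Measurable X2)
    (H2 : ℝ → ℝ)
    (hH2 : ∀ t, H2 t = (ℙ {ω | X2 ω ≤ t}).toReal)
    (U2 : ℝ → ℝ≥0∞)
    (hU2 : ∀ t, U2 t = 1 / ENNReal.ofReal (1 - H2 t))
    (hH2cont : Continuous H2)
    (hH2strict : StrictMonoOn H2 {t | H2 t < 1})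
    (I : Set ℝ) (hIopen : IsOpen I) (hIconn : I.OrdConnected)
    (ψ : ℝ → ℝ) (hψpos : ∀ y ∈ I, 0 < ψ y)
    (e f : ℕ → ℝ) (he : ∀ n, 0 < e n)
    (hsecond : ∀ y ∈ I,
      Tendsto (fun n : ℕ => (n : ℝ) * (1 - H2 (e n * y + f n))) atTop
        (nhds (1 / ψ y)))
    (χ : ℝ → ℝ → ℝ)
    (hχcont : ContinuousOn (fun p : ℝ × ℝ => χ p.1 p.2) (Ici 0 ×ˢ Ioi 0))
    (hχ : ∀ s ≥ (0:ℝ), ∀ t > (0:ℝ),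
      Tendsto (fun n : ℕ =>
          (n : ℝ) * (ℙ {ω | U2 (X1 ω) > ENNReal.ofReal (n * s) ∧
                            U2 (X2 ω) > ENNReal.ofReal (n * t)}).toReal)
        atTop (nhds (χ s t))) :
    ∀ y1 ∈ I, ∀ y2 ∈ I,
      (Tendsto (fun n : ℕ =>
          (n : ℝ) * (ℙ {ω | X1 ω > e n * y1 + f n ∧ X2 ω > e n * y2 + f n}).toReal)
        atTop (nhds (χ (ψ y1) (ψ y2)))) ∧
      (Tendsto (fun n : ℕ =>
          (n : ℝ) * (ℙ {ω | X1 ω ≤ e n * y1 + f n ∧ X2 ω > e n * y2 + f n}).toReal)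
        atTop (nhds (1 / ψ y2 - χ (ψ y1) (ψ y2)))) := by
  intro y1 hy1 y2 hy2
  have hψ1 : 0 < ψ y1 := hψpos y1 hy1
  have hψ2 : 0 < ψ y2 := hψpos y2 hy2
  -- basic facts about H2
  have hle1 : ∀ t, H2 t ≤ 1 := by
    intro t
    rw [hH2]
    have : (ℙ {ω | X2 ω ≤ t}).toReal ≤ (1 : ℝ≥0∞).toReal :=
      ENNReal.toReal_mono ENNReal.one_ne_top prob_le_one
    simpa using this
  have hmono : Monotone H2 := by
    intro x y hxy
    rw [hH2, hH2]
    exact ENNReal.toReal_mono (measure_ne_top _ _)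
      (measure_mono fun ω h => le_trans h hxy)
  have hgt : ∀ {v : ℝ}, H2 v < 1 → ∀ u, (v < u ↔ H2 v < H2 u) := by
    intro v hv u
    constructor
    · intro huv
      rcases lt_or_ge (H2 u) 1 with h | h
      · exact hH2strict hv h huv
      · have := le_antisymm (hle1 u) h
        linarith
    · intro h
      by_contra hc
      push_neg at hc
      exact absurd (hmono hc) (not_le.2 h)
  have hU2lt : ∀ {v : ℝ}, H2 v < 1 → ∀ u, (U2 v < U2 u ↔ H2 v < H2 u) := by
    intro v hv u
    rw [hU2 u, hU2 v, one_div, one_div, ENNReal.inv_lt_inv,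
      ENNReal.ofReal_lt_ofReal_iff (by linarith)]
    constructor <;> intro h <;> linarith
  have hU2eq : ∀ {t : ℝ}, 0 < 1 - H2 t → U2 t = ENNReal.ofReal (1 / (1 - H2 t)) := by
    intro t h
    rw [hU2, one_div, one_div, ENNReal.ofReal_inv_of_pos h]
  have h1 := hsecond y1 hy1
  have h2 := hsecond y2 hy2
  -- Part (a)
  have parta : Tendsto (fun n : ℕ =>
      (n : ℝ) * (ℙ {ω | X1 ω > e n * y1 + f n ∧ X2 ω > e n * y2 + f n}).toReal)
      atTop (nhds (χ (ψ y1) (ψ y2))) := by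
    set L := χ (ψ y1) (ψ y2) with hL
    rw [Metric.tendsto_nhds]
    intro ε hε
    -- continuity of χ at (ψ y1, ψ y2) within the domain
    have hmem : ((ψ y1, ψ y2) : ℝ × ℝ) ∈ Ici (0:ℝ) ×ˢ Ioi (0:ℝ) :=
      ⟨le_of_lt hψ1, hψ2⟩
    have hcw := hχcont _ hmem
    have hball := hcw (Metric.ball_mem_nhds L hε)
    rw [mem_map, Metric.mem_nhdsWithin_iff] at hball
    obtain ⟨δ, hδpos, hδ⟩ := hball
    have hcorner : ∀ s t : ℝ, 0 ≤ s → 0 < t → dist s (ψ y1) < δ → dist t (ψ y2) < δ →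
        |χ s t - L| < ε := by
      intro s t hs ht hd1 hd2
      have hmemb : ((s, t) : ℝ × ℝ) ∈ Metric.ball ((ψ y1, ψ y2) : ℝ × ℝ) δ := by
        rw [Metric.mem_ball, Prod.dist_eq]
        exact max_lt hd1 hd2
      have := hδ ⟨hmemb, ⟨hs, ht⟩⟩
      rw [mem_preimage, Metric.mem_ball, Real.dist_eq] at this
      exact this
    set r := min (δ / 2) (min (ψ y1) (ψ y2) / 2) with hr
    have hrpos : 0 < r := lt_min (by linarith) (by positivity)
    have hrδ : r < δ := lt_of_le_of_lt (min_le_left _ _) (by linarith)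
    have hr1 : r < ψ y1 := by
      have : r ≤ min (ψ y1) (ψ y2) / 2 := min_le_right _ _
      have h2' : min (ψ y1) (ψ y2) ≤ ψ y1 := min_le_left _ _
      linarith
    have hr2 : r < ψ y2 := by
      have : r ≤ min (ψ y1) (ψ y2) / 2 := min_le_right _ _
      have h2' : min (ψ y1) (ψ y2) ≤ ψ y2 := min_le_right _ _
      linarith
    set s1 := ψ y1 - r with hs1
    set s2 := ψ y1 + r with hs2
    set t1 := ψ y2 - r with ht1
    set t2 := ψ y2 + r with ht2
    have hs1pos : 0 < s1 := by simp [hs1]; linarith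
    have ht1pos : 0 < t1 := by simp [ht1]; linarith
    have hdist : ∀ c x : ℝ, dist (x - c) x < δ ∧ dist (x + c) x < δ ∨ True := fun _ _ => Or.inr trivial
    have hd_s1 : dist s1 (ψ y1) < δ := by
      rw [Real.dist_eq]; simp [hs1]; rw [abs_of_pos hrpos]; exact hrδ
    have hd_s2 : dist s2 (ψ y1) < δ := by
      rw [Real.dist_eq]; simp [hs2]; rw [abs_of_pos hrpos]; exact hrδ
    have hd_t1 : dist t1 (ψ y2) < δ := by
      rw [Real.dist_eq]; simp [ht1]; rw [abs_of_pos hrpos]; exact hrδ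
    have hd_t2 : dist t2 (ψ y2) < δ := by
      rw [Real.dist_eq]; simp [ht2]; rw [abs_of_pos hrpos]; exact hrδ
    have hc11 := hcorner s1 t1 hs1pos.le ht1pos hd_s1 hd_t1
    have hc22 := hcorner s2 t2 (by linarith : (0:ℝ) ≤ s2) (by linarith : (0:ℝ) < t2) hd_s2 hd_t2
    rw [abs_sub_lt_iff] at hc11 hc22
    -- limit statements for the fixed corners
    have hF11 := hχ s1 hs1pos.le t1 ht1pos
    have hF22 := hχ s2 (by linarith) t2 (by linarith)
    have evF1 : ∀ᶠ n : ℕ in atTop,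
        (n : ℝ) * (ℙ {ω | U2 (X1 ω) > ENNReal.ofReal (n * s1) ∧
          U2 (X2 ω) > ENNReal.ofReal (n * t1)}).toReal < L + ε :=
      hF11.eventually_lt_const (by linarith [hc11.1])
    have evF2 : ∀ᶠ n : ℕ in atTop,
        L - ε < (n : ℝ) * (ℙ {ω | U2 (X1 ω) > ENNReal.ofReal (n * s2) ∧
          U2 (X2 ω) > ENNReal.ofReal (n * t2)}).toReal :=
      hF22.eventually_const_lt (by linarith [hc22.2])
    -- eventual positivity and threshold comparisons
    have evc : ∀ᶠ n : ℕ in atTop, 0 < (n : ℝ) * (1 - H2 (e n * y1 + f n)) :=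
      h1.eventually_const_lt (by positivity)
    have evd : ∀ᶠ n : ℕ in atTop, 0 < (n : ℝ) * (1 - H2 (e n * y2 + f n)) :=
      h2.eventually_const_lt (by positivity)
    have evs1 : ∀ᶠ n : ℕ in atTop, ((n : ℝ) * (1 - H2 (e n * y1 + f n))) * s1 < 1 :=
      (h1.mul_const s1).eventually_lt_const
        (by rw [one_div_mul_eq_div, div_lt_one hψ1]; simp [hs1]; linarith)
    have evs2 : ∀ᶠ n : ℕ in atTop, 1 < ((n : ℝ) * (1 - H2 (e n * y1 + f n))) * s2 :=
      (h1.mul_const s2).eventually_const_lt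
        (by rw [one_div_mul_eq_div, lt_div_iff₀ hψ1]; simp [hs2]; linarith)
    have evt1 : ∀ᶠ n : ℕ in atTop, ((n : ℝ) * (1 - H2 (e n * y2 + f n))) * t1 < 1 :=
      (h2.mul_const t1).eventually_lt_const
        (by rw [one_div_mul_eq_div, div_lt_one hψ2]; simp [ht1]; linarith)
    have evt2 : ∀ᶠ n : ℕ in atTop, 1 < ((n : ℝ) * (1 - H2 (e n * y2 + f n))) * t2 :=
      (h2.mul_const t2).eventually_const_lt
        (by rw [one_div_mul_eq_div, lt_div_iff₀ hψ2]; simp [ht2]; linarith)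
    have evn : ∀ᶠ n : ℕ in atTop, 0 < (n : ℝ) := by
      filter_upwards [eventually_gt_atTop 0] with n hn
      exact_mod_cast hn
    filter_upwards [evF1, evF2, evc, evd, evs1, evs2, evt1, evt2, evn] with n
      hF1 hF2 hnc hnd hncs1 hncs2 hndt1 hndt2 hn
    -- derive positivity of the tail probabilities of H2 at the thresholds
    have hc : 0 < 1 - H2 (e n * y1 + f n) := by
      rcases mul_pos_iff.1 hnc with ⟨_, h⟩ | ⟨h, _⟩
      · exact h
      · exact absurd hn (not_lt.2 h.le)
    have hd : 0 < 1 - H2 (e n * y2 + f n) := by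
      rcases mul_pos_iff.1 hnd with ⟨_, h⟩ | ⟨h, _⟩
      · exact h
      · exact absurd hn (not_lt.2 h.le)
    have hH2a : H2 (e n * y1 + f n) < 1 := by linarith
    have hH2b : H2 (e n * y2 + f n) < 1 := by linarith
    -- the key event identity
    have heq : {ω | X1 ω > e n * y1 + f n ∧ X2 ω > e n * y2 + f n}
        = {ω | U2 (X1 ω) > U2 (e n * y1 + f n) ∧ U2 (X2 ω) > U2 (e n * y2 + f n)} := by
      ext ω
      simp only [mem_setOf_eq, gt_iff_lt]
      exact and_congr ((hgt hH2a (X1 ω)).trans (hU2lt hH2a (X1 ω)).symm)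
        ((hgt hH2b (X2 ω)).trans (hU2lt hH2b (X2 ω)).symm)
    -- threshold comparisons in ℝ≥0∞
    have hlow1 : ENNReal.ofReal ((n : ℝ) * s1) ≤ U2 (e n * y1 + f n) := by
      rw [hU2eq hc]
      exact ENNReal.ofReal_le_ofReal (by rw [le_div_iff₀ hc, mul_right_comm]; exact hncs1.le)
    have hlow2 : ENNReal.ofReal ((n : ℝ) * t1) ≤ U2 (e n * y2 + f n) := by
      rw [hU2eq hd]
      exact ENNReal.ofReal_le_ofReal (by rw [le_div_iff₀ hd, mul_right_comm]; exact hndt1.le)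
    have hup1 : U2 (e n * y1 + f n) ≤ ENNReal.ofReal ((n : ℝ) * s2) := by
      rw [hU2eq hc]
      exact ENNReal.ofReal_le_ofReal (by rw [div_le_iff₀ hc, mul_right_comm]; exact hncs2.le)
    have hup2 : U2 (e n * y2 + f n) ≤ ENNReal.ofReal ((n : ℝ) * t2) := by
      rw [hU2eq hd]
      exact ENNReal.ofReal_le_ofReal (by rw [div_le_iff₀ hd, mul_right_comm]; exact hndt2.le)
    -- sandwich inclusions
    have hsub1 : {ω | X1 ω > e n * y1 + f n ∧ X2 ω > e n * y2 + f n}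
        ⊆ {ω | U2 (X1 ω) > ENNReal.ofReal ((n : ℝ) * s1) ∧
            U2 (X2 ω) > ENNReal.ofReal ((n : ℝ) * t1)} := by
      rw [heq]
      intro ω hω
      exact ⟨lt_of_le_of_lt hlow1 hω.1, lt_of_le_of_lt hlow2 hω.2⟩
    have hsub2 : {ω | U2 (X1 ω) > ENNReal.ofReal ((n : ℝ) * s2) ∧
            U2 (X2 ω) > ENNReal.ofReal ((n : ℝ) * t2)}
        ⊆ {ω | X1 ω > e n * y1 + f n ∧ X2 ω > e n * y2 + f n} := by
      rw [heq]
      intro ω hω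
      exact ⟨lt_of_le_of_lt hup1 hω.1, lt_of_le_of_lt hup2 hω.2⟩
    have hG1 : (n : ℝ) * (ℙ {ω | X1 ω > e n * y1 + f n ∧ X2 ω > e n * y2 + f n}).toReal
        ≤ (n : ℝ) * (ℙ {ω | U2 (X1 ω) > ENNReal.ofReal ((n : ℝ) * s1) ∧
            U2 (X2 ω) > ENNReal.ofReal ((n : ℝ) * t1)}).toReal :=
      mul_le_mul_of_nonneg_left
        (ENNReal.toReal_mono (measure_ne_top _ _) (measure_mono hsub1)) (Nat.cast_nonneg n)
    have hG2 : (n : ℝ) * (ℙ {ω | U2 (X1 ω) > ENNReal.ofReal ((n : ℝ) * s2) ∧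
            U2 (X2 ω) > ENNReal.ofReal ((n : ℝ) * t2)}).toReal
        ≤ (n : ℝ) * (ℙ {ω | X1 ω > e n * y1 + f n ∧ X2 ω > e n * y2 + f n}).toReal :=
      mul_le_mul_of_nonneg_left
        (ENNReal.toReal_mono (measure_ne_top _ _) (measure_mono hsub2)) (Nat.cast_nonneg n)
    rw [Real.dist_eq, abs_sub_lt_iff]
    constructor
    · linarith
    · linarith
  refine ⟨parta, ?_⟩
  -- Part (b)
  have hmeas : ∀ n : ℕ, MeasurableSet {ω | X1 ω > e n * y1 + f n ∧ X2 ω > e n * y2 + f n} := by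
    intro n
    exact (measurableSet_lt measurable_const hX1).inter (measurableSet_lt measurable_const hX2)
  have hkey : ∀ n : ℕ, (ℙ {ω | X1 ω ≤ e n * y1 + f n ∧ X2 ω > e n * y2 + f n}).toReal
      = (1 - H2 (e n * y2 + f n))
        - (ℙ {ω | X1 ω > e n * y1 + f n ∧ X2 ω > e n * y2 + f n}).toReal := by
    intro n
    have hset : {ω | X1 ω ≤ e n * y1 + f n ∧ X2 ω > e n * y2 + f n}
        = {ω | X2 ω > e n * y2 + f n}
          \ {ω | X1 ω > e n * y1 + f n ∧ X2 ω > e n * y2 + f n} := by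
      ext ω
      simp only [mem_setOf_eq, mem_diff, not_and]
      constructor
      · intro ⟨h1', h2'⟩
        exact ⟨h2', fun hgt' _ => absurd hgt' (not_lt.2 h1')⟩
      · intro ⟨h2', hn'⟩
        exact ⟨le_of_not_gt fun hgt' => hn' hgt' h2', h2'⟩
    have hsub : {ω | X1 ω > e n * y1 + f n ∧ X2 ω > e n * y2 + f n}
        ⊆ {ω | X2 ω > e n * y2 + f n} := fun ω h => h.2
    rw [hset, measure_diff hsub (hmeas n).nullMeasurableSet (measure_ne_top _ _),
      ENNReal.toReal_sub_of_le (measure_mono hsub) (measure_ne_top _ _)]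
    congr 1
    -- ℙ {X2 > b} = 1 - H2 b
    have hcompl : {ω | X2 ω > e n * y2 + f n} = {ω | X2 ω ≤ e n * y2 + f n}ᶜ := by
      ext ω
      simp [not_le]
    rw [hcompl, measure_compl (measurableSet_le hX2 measurable_const) (measure_ne_top _ _),
      measure_univ, ENNReal.toReal_sub_of_le prob_le_one ENNReal.one_ne_top,
      ENNReal.toReal_one, hH2]
  refine (h2.sub parta).congr fun n => ?_
  rw [hkey n]; ring
end

section
/- Let F and D be Borel probability measures on ℝ, write F̄(t) = F((t,∞)) and D̄(t) = D((t,∞)), and let μ = (1/2)·(F ⊗ D) + (1/2)·(D ⊗ F) be the mixture of the two product measures on ℝ². Let aₙ > 0 be a sequence such that for every x > 0, n·F̄(aₙ x) → 1/x and n·D̄(aₙ x) → 0 as n → ∞. Then for every x¹, x² > 0: (a) n·( 1 − μ( (−∞, aₙ x¹] × (−∞, aₙ x²] ) ) → (1/2)( 1/x¹ + 1/x² ), and (b) n·μ( (aₙ x¹, ∞) × (aₙ x², ∞) ) → 0 as n → ∞. -/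
open MeasureTheory Filter Set
open scoped ENNReal

lemma mix_apply (F D : Measure ℝ) [IsProbabilityMeasure F] [IsProbabilityMeasure D]
    (A B : Set ℝ) :
    (((1/2 : ℝ≥0∞) • F.prod D + (1/2 : ℝ≥0∞) • D.prod F) (A ×ˢ B)).toReal
      = (1/2) * ((F A).toReal * (D B).toReal) + (1/2) * ((D A).toReal * (F B).toReal) := by
  rw [Measure.add_apply, Measure.smul_apply, Measure.smul_apply, Measure.prod_prod,
    Measure.prod_prod, smul_eq_mul, smul_eq_mul, ENNReal.toReal_add, ENNReal.toReal_mul,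
    ENNReal.toReal_mul, ENNReal.toReal_mul, ENNReal.toReal_mul]
  · norm_num
  · exact ENNReal.mul_ne_top (by norm_num) (ENNReal.mul_ne_top (measure_ne_top _ _) (measure_ne_top _ _))
  · exact ENNReal.mul_ne_top (by norm_num) (ENNReal.mul_ne_top (measure_ne_top _ _) (measure_ne_top _ _))

lemma iic_toReal (F : Measure ℝ) [IsProbabilityMeasure F] (s : ℝ) :
    (F (Iic s)).toReal = 1 - (F (Ioi s)).toReal := by
  rw [← compl_Ioi, measure_compl measurableSet_Ioi (measure_ne_top _ _), measure_univ,
    ENNReal.toReal_sub_of_le prob_le_one ENNReal.one_ne_top, ENNReal.toReal_one]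

theorem mixture_mrv_asymptotic_independence
    (F D : Measure ℝ) [IsProbabilityMeasure F] [IsProbabilityMeasure D]
    (μ : Measure (ℝ × ℝ))
    (hμ : μ = (1/2 : ℝ≥0∞) • F.prod D + (1/2 : ℝ≥0∞) • D.prod F)
    (a : ℕ → ℝ) (ha : ∀ n, 0 < a n)
    (hF : ∀ x > (0:ℝ),
      Tendsto (fun n : ℕ => (n : ℝ) * (F (Ioi (a n * x))).toReal) atTop
        (nhds (1 / x)))
    (hD : ∀ x > (0:ℝ),
      Tendsto (fun n : ℕ => (n : ℝ) * (D (Ioi (a n * x))).toReal) atTop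
        (nhds 0)) :
    ∀ x1 > (0:ℝ), ∀ x2 > (0:ℝ),
      (Tendsto (fun n : ℕ =>
          (n : ℝ) * (1 - (μ (Iic (a n * x1) ×ˢ Iic (a n * x2))).toReal)) atTop
        (nhds ((1/2) * (1 / x1 + 1 / x2)))) ∧
      (Tendsto (fun n : ℕ =>
          (n : ℝ) * (μ (Ioi (a n * x1) ×ˢ Ioi (a n * x2))).toReal) atTop
        (nhds 0)) := by
  intro x1 hx1 x2 hx2
  set f1 : ℕ → ℝ := fun n : ℕ => (F (Ioi (a n * x1))).toReal with hf1
  set f2 : ℕ → ℝ := fun n : ℕ => (F (Ioi (a n * x2))).toReal with hf2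
  set d1 : ℕ → ℝ := fun n : ℕ => (D (Ioi (a n * x1))).toReal with hd1
  set d2 : ℕ → ℝ := fun n : ℕ => (D (Ioi (a n * x2))).toReal with hd2
  have hF1 := hF x1 hx1
  have hF2 := hF x2 hx2
  have hD1 := hD x1 hx1
  have hD2 := hD x2 hx2
  have hf1le : ∀ n, f1 n ≤ 1 := fun n : ℕ => by
    simpa using ENNReal.toReal_mono ENNReal.one_ne_top (prob_le_one (μ := F))
  have hf2le : ∀ n, f2 n ≤ 1 := fun n : ℕ => by
    simpa using ENNReal.toReal_mono ENNReal.one_ne_top (prob_le_one (μ := F))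
  have hnn : ∀ (ν : Measure ℝ) (s : Set ℝ) (n : ℕ), 0 ≤ (n : ℝ) * (ν s).toReal :=
    fun ν s n => mul_nonneg (Nat.cast_nonneg n) ENNReal.toReal_nonneg
  -- f1 n * (n * d2 n) → 0
  have hp1 : Tendsto (fun n : ℕ => f1 n * ((n : ℝ) * d2 n)) atTop (nhds 0) := by
    apply squeeze_zero (fun n : ℕ => mul_nonneg ENNReal.toReal_nonneg (hnn D _ n))
      (fun n : ℕ => ?_) hD2
    calc f1 n * ((n : ℝ) * d2 n) ≤ 1 * ((n : ℝ) * d2 n) :=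
          mul_le_mul_of_nonneg_right (hf1le n) (hnn D _ n)
      _ = (n : ℝ) * d2 n := one_mul _
  have hp2 : Tendsto (fun n : ℕ => ((n : ℝ) * d1 n) * f2 n) atTop (nhds 0) := by
    apply squeeze_zero (fun n : ℕ => mul_nonneg (hnn D _ n) ENNReal.toReal_nonneg)
      (fun n : ℕ => ?_) hD1
    calc ((n : ℝ) * d1 n) * f2 n ≤ ((n : ℝ) * d1 n) * 1 :=
          mul_le_mul_of_nonneg_left (hf2le n) (hnn D _ n)
      _ = (n : ℝ) * d1 n := mul_one _
  constructor
  · have key : Tendsto (fun n : ℕ => (1/2 : ℝ) * (((n : ℝ) * f1 n + (n : ℝ) * d2 n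
        - f1 n * ((n : ℝ) * d2 n)) + ((n : ℝ) * d1 n + (n : ℝ) * f2 n
        - ((n : ℝ) * d1 n) * f2 n))) atTop (nhds ((1/2) * (1 / x1 + 1 / x2))) := by
      have : Tendsto (fun n : ℕ => ((n : ℝ) * f1 n + (n : ℝ) * d2 n
          - f1 n * ((n : ℝ) * d2 n)) + ((n : ℝ) * d1 n + (n : ℝ) * f2 n
          - ((n : ℝ) * d1 n) * f2 n)) atTop (nhds ((1/x1 + 0 - 0) + (0 + 1/x2 - 0))) :=
        (((hF1.add hD2).sub hp1).add ((hD1.add hF2).sub hp2))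
      have := this.const_mul (1/2 : ℝ)
      simpa using this
    refine key.congr fun n : ℕ => ?_
    rw [hμ, mix_apply, iic_toReal, iic_toReal, iic_toReal F, iic_toReal D]
    show (1/2 : ℝ) * _ = (n : ℝ) * _
    ring
  · have key : Tendsto (fun n : ℕ => (1/2 : ℝ) * (f1 n * ((n : ℝ) * d2 n)
        + ((n : ℝ) * d1 n) * f2 n)) atTop (nhds 0) := by
      have := (hp1.add hp2).const_mul (1/2 : ℝ)
      simpa using this
    refine key.congr fun n : ℕ => ?_
    rw [hμ, mix_apply]
    show (1/2 : ℝ) * _ = (n : ℝ) * _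
    ring
end

section
/- Let F and D be Borel probability measures on ℝ, write F̄(t) = F((t,∞)) and D̄(t) = D((t,∞)), and let μ = (1/2)·(F ⊗ D) + (1/2)·(D ⊗ F) be the mixture of the two product measures on ℝ². Let cₙ > 0 and dₙ ∈ ℝ be sequences such that: (i) for every y ∈ ℝ, n·F̄(cₙ y + dₙ)·D̄(cₙ y + dₙ) → e^{−y} as n → ∞, and (ii) for every y¹, y² ∈ ℝ, F̄(cₙ y¹ + dₙ) > 0 for all large n and F̄(cₙ y¹ + dₙ)/F̄(cₙ y² + dₙ) → 1 as n → ∞. Then for every x¹, x² ∈ ℝ, n·μ( (cₙ x¹ + dₙ, ∞) × (cₙ x² + dₙ, ∞) ) → (1/2)( e^{−x¹} + e^{−x²} ) as n → ∞. -/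
open MeasureTheory Filter Set
open scoped ENNReal

theorem mixture_hidden_domain_of_attraction
    (F D : Measure ℝ) [IsProbabilityMeasure F] [IsProbabilityMeasure D]
    (μ : Measure (ℝ × ℝ))
    (hμ : μ = (1/2 : ℝ≥0∞) • F.prod D + (1/2 : ℝ≥0∞) • D.prod F)
    (c d : ℕ → ℝ) (hc : ∀ n, 0 < c n)
    (hFD : ∀ y : ℝ,
      Tendsto (fun n : ℕ =>
          (n : ℝ) * ((F (Ioi (c n * y + d n))).toReal *
            (D (Ioi (c n * y + d n))).toReal)) atTop
        (nhds (Real.exp (-y))))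
    (hFpos : ∀ y1 : ℝ, ∀ᶠ n : ℕ in atTop, 0 < (F (Ioi (c n * y1 + d n))).toReal)
    (hFratio : ∀ y1 y2 : ℝ,
      Tendsto (fun n : ℕ =>
          (F (Ioi (c n * y1 + d n))).toReal / (F (Ioi (c n * y2 + d n))).toReal)
        atTop (nhds 1)) :
    ∀ x1 x2 : ℝ,
      Tendsto (fun n : ℕ =>
          (n : ℝ) * (μ (Ioi (c n * x1 + d n) ×ˢ Ioi (c n * x2 + d n))).toReal)
        atTop (nhds ((1/2) * (Real.exp (-x1) + Real.exp (-x2)))) := by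
  intro x1 x2
  set Fb : ℝ → ℕ → ℝ := fun y n => (F (Ioi (c n * y + d n))).toReal with hFb
  set Db : ℝ → ℕ → ℝ := fun y n => (D (Ioi (c n * y + d n))).toReal with hDb
  have hμval : ∀ n : ℕ,
      (n : ℝ) * (μ (Ioi (c n * x1 + d n) ×ˢ Ioi (c n * x2 + d n))).toReal
        = (1/2) * ((n : ℝ) * (Fb x1 n * Db x2 n) + (n : ℝ) * (Db x1 n * Fb x2 n)) := by
    intro n
    have hFfin : F (Ioi (c n * x1 + d n)) ≠ ∞ := measure_ne_top F _
    have hDfin : D (Ioi (c n * x2 + d n)) ≠ ∞ := measure_ne_top D _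
    have hDfin1 : D (Ioi (c n * x1 + d n)) ≠ ∞ := measure_ne_top D _
    have hFfin2 : F (Ioi (c n * x2 + d n)) ≠ ∞ := measure_ne_top F _
    rw [hμ]
    simp only [Measure.add_apply, Measure.smul_apply, Measure.prod_prod, smul_eq_mul]
    rw [ENNReal.toReal_add
        (ENNReal.mul_ne_top (by norm_num) (ENNReal.mul_ne_top hFfin hDfin))
        (ENNReal.mul_ne_top (by norm_num) (ENNReal.mul_ne_top hDfin1 hFfin2)),
      ENNReal.toReal_mul, ENNReal.toReal_mul, ENNReal.toReal_mul, ENNReal.toReal_mul]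
    have : ((1/2 : ℝ≥0∞)).toReal = 1/2 := by norm_num
    rw [this]
    ring
  simp only [hμval]
  have h1 : Tendsto (fun n : ℕ => (n : ℝ) * (Fb x1 n * Db x2 n)) atTop
      (nhds (Real.exp (-x2))) := by
    have := (hFD x2).mul (hFratio x1 x2)
    rw [mul_one] at this
    apply this.congr'
    filter_upwards [hFpos x2] with n hn
    have : Fb x2 n ≠ 0 := ne_of_gt hn
    field_simp
    ring
  have h2 : Tendsto (fun n : ℕ => (n : ℝ) * (Db x1 n * Fb x2 n)) atTop
      (nhds (Real.exp (-x1))) := by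
    have := (hFD x1).mul (hFratio x2 x1)
    rw [mul_one] at this
    apply this.congr'
    filter_upwards [hFpos x1] with n hn
    have : Fb x1 n ≠ 0 := ne_of_gt hn
    field_simp
    ring
  have := (h1.add h2).const_mul (1/2 : ℝ)
  convert this using 2
  ring
end

section
/- Let λ denote Lebesgue measure on the interval (0,1). For every x¹, x² ∈ ℝ, as n → ∞: (a) if x¹ + x² ≤ 0, then n·λ{ u ∈ (0,1) : 1/u > 2 + 2x¹/(n+1) and 1/(1−u) > 2 + 2x²/(n+1) } → (1/2)( (−x¹) + (−x²) ); and (b) if x¹ + x² > 0, then n·λ{ u ∈ (0,1) : 1/u > 2 + 2x¹/(n+1) and 1/(1−u) > 2 + 2x²/(n+1) } → 0. -/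
/-!
For `a, b ≥ 1` the set `{u ∈ (0,1) : 1/u > a, 1/(1-u) > b}` is the interval `(1 - 1/b, 1/a)`,
of length `max ((1/a - 1/2) + (1/b - 1/2)) 0`. With `a = 2 + 2x/(n+1)` one has
`1/a - 1/2 = -(x/2) / (n + 1 + x)`, so `n` times the length tends to `max (-(x¹ + x²)/2) 0`.
-/

open MeasureTheory Filter Set Topology

lemma setOf_mem_Ioo_lt_one_div_eq_Ioo {a b : ℝ} (ha : 1 ≤ a) (hb : 1 ≤ b) :
    {u : ℝ | u ∈ Ioo (0:ℝ) 1 ∧ 1 / u > a ∧ 1 / (1 - u) > b} = Ioo (1 - 1 / b) (1 / a) := by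
  have ha' : 1 / a ≤ 1 := div_le_one_of_le₀ ha (by linarith)
  have hb' : 1 / b ≤ 1 := div_le_one_of_le₀ hb (by linarith)
  ext u
  simp only [mem_ofPred_eq, mem_Ioo, gt_iff_lt]
  constructor
  · rintro ⟨⟨hu0, hu1⟩, hua, hub⟩
    rw [lt_one_div (by linarith) hu0] at hua
    rw [lt_one_div (by linarith) (by linarith)] at hub
    exact ⟨by linarith, hua⟩
  · rintro ⟨hbu, hua⟩
    have hu0 : 0 < u := by linarith
    refine ⟨⟨hu0, by linarith⟩, ?_, ?_⟩
    · rwa [lt_one_div (by linarith) hu0]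
    · rw [lt_one_div (by linarith) (by linarith)]
      linarith

lemma volume_setOf_mem_Ioo_lt_one_div_toReal {a b : ℝ} (ha : 1 ≤ a) (hb : 1 ≤ b) :
    (volume {u : ℝ | u ∈ Ioo (0:ℝ) 1 ∧ 1 / u > a ∧ 1 / (1 - u) > b}).toReal =
      max ((1 / a - 1 / 2) + (1 / b - 1 / 2)) 0 := by
  rw [setOf_mem_Ioo_lt_one_div_eq_Ioo ha hb, Real.volume_Ioo, ENNReal.toReal_ofReal']
  ring_nf

lemma tendsto_add_mul_div_natCast_add_one (c x : ℝ) :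
    Tendsto (fun n : ℕ => c + c * x / (n + 1)) atTop (𝓝 c) := by
  have h := (tendsto_one_div_add_atTop_nhds_zero_nat (𝕜 := ℝ)).const_mul (c * x)
  rw [mul_zero] at h
  simpa only [add_zero, mul_one_div] using h.const_add c

lemma tendsto_natCast_mul_one_div_add_mul_div_sub (c x : ℝ) :
    Tendsto (fun n : ℕ => n * (1 / (c + c * x / (n + 1)) - 1 / c)) atTop (𝓝 (-x / c)) := by
  have h := (tendsto_natCast_div_add_atTop (1 + x : ℝ)).const_mul (-x / c)
  rw [mul_one] at h
  refine h.congr' ?_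
  filter_upwards [eventually_gt_atTop ⌈-(1 + x)⌉₊] with n hn
  have hpos : 0 < (n : ℝ) + (1 + x) := by
    linarith [Nat.lt_of_ceil_lt hn]
  rcases eq_or_ne c 0 with rfl | hc
  · simp
  have hn1 : (n : ℝ) + 1 ≠ 0 := by positivity
  have hsum : c + c * x / (n + 1) = c * (n + (1 + x)) / (n + 1) := by
    field_simp; ring
  rw [hsum]
  field_simp
  ring

theorem uniform_reciprocal_hda :
    ∀ x1 x2 : ℝ,
      (x1 + x2 ≤ 0 →
        Tendsto (fun n : ℕ =>
            (n : ℝ) * (volume {u : ℝ | u ∈ Ioo (0:ℝ) 1 ∧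
                1 / u > 2 + 2 * x1 / (n + 1) ∧
                1 / (1 - u) > 2 + 2 * x2 / (n + 1)}).toReal)
          atTop (nhds ((1/2) * ((-x1) + (-x2))))) ∧
      (x1 + x2 > 0 →
        Tendsto (fun n : ℕ =>
            (n : ℝ) * (volume {u : ℝ | u ∈ Ioo (0:ℝ) 1 ∧
                1 / u > 2 + 2 * x1 / (n + 1) ∧
                1 / (1 - u) > 2 + 2 * x2 / (n + 1)}).toReal)
          atTop (nhds 0)) := by
  intro x1 x2
  have key : Tendsto (fun n : ℕ =>
      (n : ℝ) * (volume {u : ℝ | u ∈ Ioo (0:ℝ) 1 ∧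
          1 / u > 2 + 2 * x1 / (n + 1) ∧
          1 / (1 - u) > 2 + 2 * x2 / (n + 1)}).toReal)
      atTop (𝓝 (max (-x1 / 2 + -x2 / 2) 0)) := by
    have hsum := (tendsto_natCast_mul_one_div_add_mul_div_sub 2 x1).add
      (tendsto_natCast_mul_one_div_add_mul_div_sub 2 x2)
    refine (hsum.max tendsto_const_nhds).congr' ?_
    have hle (x : ℝ) : ∀ᶠ n : ℕ in atTop, 1 ≤ 2 + 2 * x / (n + 1) :=
      (tendsto_add_mul_div_natCast_add_one 2 x).eventually_const_le (by norm_num)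
    filter_upwards [hle x1, hle x2] with n h1 h2
    rw [volume_setOf_mem_Ioo_lt_one_div_toReal h1 h2, mul_max_of_nonneg _ _ n.cast_nonneg,
      mul_zero, mul_add]
  refine ⟨fun h => ?_, fun h => ?_⟩
  · convert key using 2
    rw [max_eq_left (by linarith)]
    ring
  · rwa [max_eq_right (by linarith)] at key
end

section
/- Let μ be the product measure on ℝ² of the exponential distribution with rate 1 (density e^{−x} on [0,∞)) and the exponential distribution with rate 2 (density 2e^{−2x} on [0,∞)). Then for every x¹, x² ∈ ℝ, n·( 1 − μ( (−∞, log n + x¹] × (−∞, log n + x²] ) ) → e^{−x¹} as n → ∞. -/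
open MeasureTheory Filter Set

/-- The exponential distribution with rate `r`: density `r * exp (-(r * x))` on `[0, ∞)`. -/
noncomputable def expMeas (r : ℝ) : Measure ℝ :=
  volume.withDensity fun x => ENNReal.ofReal (if 0 ≤ x then r * Real.exp (-(r * x)) else 0)

/-! On `[0, ∞)²` the joint distribution function is `(1 - e^{-a}) (1 - e^{-2b})`, so with
`p = e^{-a}`, `q = e^{-2b}` the rescaled tail is `n (p + q - p q)`. At `a = log n + x¹`,
`b = log n + x²` one has `n p = e^{-x¹}` while `n q = e^{-2x²} / n → 0`: the second coordinate,
having the lighter tail, is invisible in the limit. -/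

open Real Topology

instance (r : ℝ) : SFinite (expMeas r) := by unfold expMeas; infer_instance

lemma expMeas_Iic {r : ℝ} (hr : 0 < r) {a : ℝ} (ha : 0 ≤ a) :
    expMeas r (Iic a) = ENNReal.ofReal (1 - exp (-(r * a))) := by
  have h := ProbabilityTheory.lintegral_exponentialPDF_eq_antiDeriv hr a
  rw [if_pos ha] at h
  rw [expMeas, withDensity_apply _ measurableSet_Iic, ← h]
  refine setLIntegral_congr_fun measurableSet_Iic fun x _ => ?_
  rw [ProbabilityTheory.exponentialPDF_eq]

lemma one_sub_exp_neg_mul_nonneg {r a : ℝ} (hr : 0 < r) (ha : 0 ≤ a) :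
    0 ≤ 1 - exp (-(r * a)) := by
  have : exp (-(r * a)) ≤ 1 := exp_le_one_iff.mpr (by nlinarith)
  linarith

lemma expMeas_prod_Iic_prod_Iic_toReal {r s a b : ℝ} (hr : 0 < r) (hs : 0 < s)
    (ha : 0 ≤ a) (hb : 0 ≤ b) :
    ((expMeas r).prod (expMeas s) (Iic a ×ˢ Iic b)).toReal =
      (1 - exp (-(r * a))) * (1 - exp (-(s * b))) := by
  rw [Measure.prod_prod, expMeas_Iic hr ha, expMeas_Iic hs hb, ENNReal.toReal_mul,
    ENNReal.toReal_ofReal (one_sub_exp_neg_mul_nonneg hr ha),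
    ENNReal.toReal_ofReal (one_sub_exp_neg_mul_nonneg hs hb)]

lemma tendsto_mul_one_sub_mul_one_sub {α : Type*} {l : Filter α} {t p q : α → ℝ} {c : ℝ}
    (hp : Tendsto (fun a => t a * p a) l (𝓝 c)) (hq : Tendsto (fun a => t a * q a) l (𝓝 0))
    (hq₀ : Tendsto q l (𝓝 0)) :
    Tendsto (fun a => t a * (1 - (1 - p a) * (1 - q a))) l (𝓝 c) := by
  have h := (hp.add hq).sub (hp.mul hq₀)
  rw [add_zero, mul_zero, sub_zero] at h
  exact h.congr fun a => by ring

lemma eventually_nonneg_log_add (x : ℝ) : ∀ᶠ t in atTop, 0 ≤ log t + x :=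
  (tendsto_atTop_add_const_right _ x tendsto_log_atTop).eventually_ge_atTop 0

lemma tendsto_exp_neg_mul_log_add {r : ℝ} (hr : 0 < r) (x : ℝ) :
    Tendsto (fun t => exp (-(r * (log t + x)))) atTop (𝓝 0) := by
  have h : Tendsto (fun t => -(r * (log t + x))) atTop atBot :=
    tendsto_neg_atTop_atBot.comp
      ((tendsto_atTop_add_const_right _ x tendsto_log_atTop).const_mul_atTop hr)
  exact tendsto_exp_atBot.comp h

lemma mul_exp_neg_mul_log_add {t : ℝ} (ht : 0 < t) (r x : ℝ) :
    t * exp (-(r * (log t + x))) = exp (-((r - 1) * (log t + x))) * exp (-x) := by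
  nth_rw 1 [← exp_log ht]
  rw [← exp_add, ← exp_add]
  ring_nf

lemma tendsto_mul_exp_neg_log_add (x : ℝ) :
    Tendsto (fun t => t * exp (-(1 * (log t + x)))) atTop (𝓝 (exp (-x))) := by
  refine tendsto_const_nhds.congr' ?_
  filter_upwards [eventually_gt_atTop 0] with t ht
  rw [mul_exp_neg_mul_log_add ht, sub_self, zero_mul, neg_zero, exp_zero, one_mul]

lemma tendsto_mul_exp_neg_mul_log_add {r : ℝ} (hr : 1 < r) (x : ℝ) :
    Tendsto (fun t => t * exp (-(r * (log t + x)))) atTop (𝓝 0) := by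
  have h := (tendsto_exp_neg_mul_log_add (sub_pos.mpr hr) x).mul_const (exp (-x))
  rw [zero_mul] at h
  refine h.congr' ?_
  filter_upwards [eventually_gt_atTop 0] with t ht
  rw [mul_exp_neg_mul_log_add ht]

theorem exp_pair_domain_of_attraction :
    ∀ x1 x2 : ℝ,
      Tendsto (fun n : ℕ =>
          (n : ℝ) * (1 - (((expMeas 1).prod (expMeas 2))
            (Iic (Real.log n + x1) ×ˢ Iic (Real.log n + x2))).toReal))
        atTop (nhds (Real.exp (-x1))) := by
  intro x1 x2
  have hcdf : ∀ᶠ t in atTop,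
      t * (1 - (1 - exp (-(1 * (log t + x1)))) * (1 - exp (-(2 * (log t + x2))))) =
        t * (1 - ((expMeas 1).prod (expMeas 2) (Iic (log t + x1) ×ˢ Iic (log t + x2))).toReal) := by
    filter_upwards [eventually_nonneg_log_add x1, eventually_nonneg_log_add x2] with t h1 h2
    rw [expMeas_prod_Iic_prod_Iic_toReal one_pos two_pos h1 h2]
  have hlim := tendsto_mul_one_sub_mul_one_sub (tendsto_mul_exp_neg_log_add x1)
    (tendsto_mul_exp_neg_mul_log_add one_lt_two x2) (tendsto_exp_neg_mul_log_add two_pos x2)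
  exact (hlim.congr' hcdf).comp tendsto_natCast_atTop_atTop
end

section
/- Let μ be the product measure on ℝ² of the exponential distribution with rate 1 (density e^{−x} on [0,∞)) and the exponential distribution with rate 2 (density 2e^{−2x} on [0,∞)). Then for every x¹, x² ∈ ℝ, as n → ∞: (a) n·μ( (−∞, (log n)/2 + x¹] × ((log n)/2 + x², ∞) ) → e^{−2x²}, and (b) n·μ( ((log n)/2 + x¹, ∞) × ((log n)/2 + x², ∞) ) → 0. -/
open MeasureTheory Filter Set

/-!
With `bₙ = (log n)/2` the tail of `Exp(2)` at level `bₙ + x²` is `e^{-2x²}/n` exactly, so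
`n μ(A × (bₙ + x², ∞)) = Exp(1)(A) · e^{-2x²}` for every `A`. Since `bₙ → ∞`,
`Exp(1)((-∞, bₙ + x¹]) → 1` and `Exp(1)((bₙ + x¹, ∞)) → 0`.
-/

open Real ProbabilityTheory Topology

theorem tendsto_probReal_Iic_atTop {α : Type*} [MeasurableSpace α] [Preorder α]
    [(atTop : Filter α).IsCountablyGenerated] (μ : Measure α) [IsProbabilityMeasure μ] :
    Tendsto (fun x => μ.real (Iic x)) atTop (𝓝 1) := by
  simpa [Function.comp_def, measureReal_def] using
    (ENNReal.tendsto_toReal (measure_ne_top μ univ)).comp (tendsto_measure_Iic_atTop μ)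

theorem tendsto_probReal_Ioi_atTop {α : Type*} [MeasurableSpace α] [LinearOrder α]
    [TopologicalSpace α] [OrderClosedTopology α] [OpensMeasurableSpace α]
    [(atTop : Filter α).IsCountablyGenerated] (μ : Measure α) [IsProbabilityMeasure μ] :
    Tendsto (fun x => μ.real (Ioi x)) atTop (𝓝 0) := by
  simp_rw [← compl_Iic, probReal_compl_eq_one_sub measurableSet_Iic]
  simpa using (tendsto_probReal_Iic_atTop μ).const_sub 1

theorem expMeas_eq_expMeasure (r : ℝ) : expMeas r = expMeasure r := by
  simp only [expMeas, expMeasure, gammaMeasure, ← exponentialPDF_eq]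
  rfl

theorem isProbabilityMeasure_expMeas {r : ℝ} (hr : 0 < r) : IsProbabilityMeasure (expMeas r) := by
  rw [expMeas_eq_expMeasure]
  exact isProbabilityMeasure_expMeasure hr

theorem expMeas_real_Ioi {r x : ℝ} (hr : 0 < r) (hx : 0 ≤ x) :
    (expMeas r).real (Ioi x) = exp (-(r * x)) := by
  have := isProbabilityMeasure_expMeasure hr
  rw [expMeas_eq_expMeasure, ← compl_Iic, probReal_compl_eq_one_sub measurableSet_Iic,
    ← cdf_eq_real, cdf_expMeasure_eq hr, if_pos hx, sub_sub_cancel]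

theorem tendsto_log_div_two_add_atTop (c : ℝ) :
    Tendsto (fun n : ℕ => log n / 2 + c) atTop atTop :=
  tendsto_atTop_add_const_right _ c
    ((tendsto_log_atTop.comp tendsto_natCast_atTop_atTop).atTop_div_const two_pos)

theorem natCast_mul_exp_neg_two_mul_log_div_two_add {n : ℕ} (hn : 0 < n) (c : ℝ) :
    (n : ℝ) * exp (-(2 * (log n / 2 + c))) = exp (-(2 * c)) := by
  rw [show -(2 * (log n / 2 + c)) = -log n + -(2 * c) by ring, exp_add, exp_neg,
    exp_log (by positivity), ← mul_assoc, mul_inv_cancel₀ (by positivity), one_mul]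

theorem tendsto_natCast_mul_prod_expMeas_two_Ioi {β : Type*} [MeasurableSpace β]
    (μ : Measure β) {A : ℕ → Set β} {L : ℝ} (hA : Tendsto (fun n => μ.real (A n)) atTop (𝓝 L))
    (x : ℝ) :
    Tendsto (fun n : ℕ => (n : ℝ) * (μ.prod (expMeas 2) (A n ×ˢ Ioi (log n / 2 + x))).toReal)
      atTop (𝓝 (L * exp (-(2 * x)))) := by
  have := isProbabilityMeasure_expMeas two_pos
  refine (hA.mul_const _).congr' ?_
  filter_upwards [(tendsto_log_div_two_add_atTop x).eventually_ge_atTop 0,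
    eventually_gt_atTop 0] with n hx hn
  rw [Measure.prod_prod, ENNReal.toReal_mul, ← measureReal_def, ← measureReal_def,
    expMeas_real_Ioi two_pos hx, ← natCast_mul_exp_neg_two_mul_log_div_two_add hn x]
  ring

theorem exp_pair_hda_medium_cone :
    ∀ x1 x2 : ℝ,
      (Tendsto (fun n : ℕ =>
          (n : ℝ) * (((expMeas 1).prod (expMeas 2))
            (Iic (Real.log n / 2 + x1) ×ˢ Ioi (Real.log n / 2 + x2))).toReal)
        atTop (nhds (Real.exp (-(2 * x2))))) ∧
      (Tendsto (fun n : ℕ =>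
          (n : ℝ) * (((expMeas 1).prod (expMeas 2))
            (Ioi (Real.log n / 2 + x1) ×ˢ Ioi (Real.log n / 2 + x2))).toReal)
        atTop (nhds 0)) := by
  intro x1 x2
  have := isProbabilityMeasure_expMeas one_pos
  have hb := tendsto_log_div_two_add_atTop x1
  constructor
  · simpa using tendsto_natCast_mul_prod_expMeas_two_Ioi _
      ((tendsto_probReal_Iic_atTop (expMeas 1)).comp hb) x2
  · simpa using tendsto_natCast_mul_prod_expMeas_two_Ioi _
      ((tendsto_probReal_Ioi_atTop (expMeas 1)).comp hb) x2
end
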